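/- For all r, s ∈ ℕ with r, s ≥ 1, every n ∈ ℕ, and every x ∈ ℚ, one has Σ_{m=0}^{n} DC_m^{(r,s)}(x) · S_2(n,m) = Σ_{l=0}^{n} C(n,l) · B_l^{(r)}(x) · E_{n−l}^{(s)}, where DC_m^{(r,s)}(x) are the Daehee–Changhee mixed-type polynomials of order (r,s), S_2(n,m) are the Stirling numbers of the second kind, B_l^{(r)}(x) are the Bernoulli polynomials of order r, and E_{n−l}^{(s)} = E_{n−l}^{(s)}(0) are the Euler numbers of order s. -/

import Mathlib

/-- `log(1+t) = ∑_{n ≥ 1} (-1)^{n+1} t^n / n` as a formal power series over `ℚ`. -/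
noncomputable def logOneAdd : PowerSeries ℚ :=
  PowerSeries.mk fun n => if n = 0 then 0 else (-1 : ℚ) ^ (n + 1) / n

/-- `e^{xt} = ∑_{n ≥ 0} x^n t^n / n!` as a formal power series over `ℚ`. -/
noncomputable def expMul (x : ℚ) : PowerSeries ℚ :=
  PowerSeries.mk fun n => x ^ n / (n.factorial : ℚ)

/-- Formal composition `f(g(t))` of power series, intended for `g` with zero
constant term (then `coeff n (g^m) = 0` for `m > n`, so the sum below is the
full composition). -/
noncomputable def psComp (f g : PowerSeries ℚ) : PowerSeries ℚ :=
  PowerSeries.mk fun n =>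
    ∑ m ∈ Finset.range (n + 1),
      PowerSeries.coeff m f * PowerSeries.coeff n (g ^ m)

/-- `(1+t)^x := exp (x · log(1+t))` as a formal power series over `ℚ`. -/
noncomputable def onePlusPow (x : ℚ) : PowerSeries ℚ :=
  psComp (PowerSeries.exp ℚ) (x • logOneAdd)

/-- The falling factorial `(x)_n = x (x-1) ⋯ (x-n+1)`. -/
def fallFact (x : ℚ) (n : ℕ) : ℚ := ∏ i ∈ Finset.range n, (x - (i : ℚ))

/-!
Substitute `t ↦ eᵗ - 1` into the generating function of `DC`. Since `log (1 + t)` becomes `t`,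
`(1 + t) ^ x` becomes `e^{xt}` and `t + 2` becomes `eᵗ + 1`, the composite `DC(eᵗ - 1)` is the
product of the generating functions of `B^{(r)}(x)` and `E^{(s)}`. Comparing `n`-th coefficients,
the left side expands through the powers `(eᵗ - 1) ^ m`, i.e. through the Stirling numbers, and the
right side is a binomial convolution.
-/

open PowerSeries Finset
open scoped Nat

namespace PowerSeries

theorem coeff_subst_eq_sum_range {R : Type*} [CommRing R] {f g : R⟦X⟧}
    (hg : constantCoeff g = 0) (n : ℕ) :
    coeff n (f.subst g) = ∑ m ∈ range (n + 1), coeff m f * coeff n (g ^ m) := by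
  rw [coeff_subst' (HasSubst.of_constantCoeff_zero' hg)]
  refine finsum_eq_sum_of_support_subset _ fun m hm => ?_
  by_contra hmn
  refine hm ?_
  rw [coe_range, Set.mem_Iio, not_lt] at hmn
  change coeff m f • coeff n (g ^ m) = 0
  rw [coeff_of_lt_order n ((Nat.cast_lt.2 hmn).trans_le
    (le_order_pow_of_constantCoeff_eq_zero m hg)), smul_zero]

section RatAlgebra

variable (A : Type*) [CommRing A] [Algebra ℚ A]

theorem one_add_X_mul_derivative_log : (1 + X) * d⁄dX A (log A) = 1 := by
  ext (_ | n)
  · simp [deriv_log]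
  · simp [deriv_log, add_mul, coeff_succ_X_mul, pow_succ]

theorem log_subst_exp_sub_one : (log A).subst (exp A - 1) = X := by
  have := IsAddTorsionFree.of_module_rat A
  have hsub := HasSubst.exp_sub_one (A := A)
  refine derivative.ext ?_ ?_
  · -- substituting into `(1 + X) * log' = 1` gives `exp A * log'(exp A - 1) = 1`
    have h := congrArg (substAlgHom (R := A) hsub) (one_add_X_mul_derivative_log A)
    simp only [map_mul, map_add, map_one, coe_substAlgHom, subst_X hsub, add_sub_cancel] at h
    rw [derivative_subst hsub, map_sub, derivative_exp, derivative_one, sub_zero, derivative_X,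
      mul_comm, h]
  · have h0 : constantCoeff (exp A - 1) = 0 := by simp
    rw [constantCoeff_X]
    exact constantCoeff_subst_eq_zero h0 _ constantCoeff_log

end RatAlgebra

/- `Algebra ℚ K` rather than `CharZero K`: at `K = ℚ` the series `exp K` must be built with the
instance `Algebra.id`, as it is in the hypotheses of the theorem. -/
variable {K : Type*} [Field K] [Algebra ℚ K]

theorem factorial_mul_coeff_mul_mk_div_factorial (a b : ℕ → K) (n : ℕ) :
    n ! * coeff n ((mk fun k => a k / k !) * mk fun k => b k / k !) =
      ∑ l ∈ range (n + 1), n.choose l * a l * b (n - l) := by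
  have := Algebra.charZero_of_charZero ℚ K
  rw [coeff_mul, Nat.sum_antidiagonal_eq_sum_range_succ_mk, mul_sum]
  refine sum_congr rfl fun l hl => ?_
  have hln : l ≤ n := Nat.lt_succ_iff.1 (mem_range.1 hl)
  simp only [coeff_mk]
  rw [Nat.cast_choose K hln]
  field_simp

theorem factorial_mul_coeff_subst_exp_sub_one (c : ℕ → K) (S2 : ℕ → ℕ → K)
    (hS2 : ∀ m, (exp K - 1) ^ m = (m ! : K) • mk fun k => S2 k m / k !) (n : ℕ) :
    n ! * coeff n ((mk fun k => c k / k !).subst (exp K - 1)) =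
      ∑ m ∈ range (n + 1), c m * S2 n m := by
  have := Algebra.charZero_of_charZero ℚ K
  rw [coeff_subst_eq_sum_range (by simp), mul_sum]
  refine sum_congr rfl fun m _ => ?_
  have hn : (n ! : K) ≠ 0 := Nat.cast_ne_zero.2 n.factorial_ne_zero
  have hm : (m ! : K) ≠ 0 := Nat.cast_ne_zero.2 m.factorial_ne_zero
  rw [hS2, coeff_smul, coeff_mk, coeff_mk, smul_eq_mul]
  field_simp

end PowerSeries

theorem logOneAdd_eq_log : logOneAdd = log ℚ := by
  ext n
  simp [logOneAdd]

theorem psComp_eq_subst (f : ℚ⟦X⟧) {g : ℚ⟦X⟧} (hg : constantCoeff g = 0) :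
    psComp f g = f.subst g := by
  ext n
  rw [psComp, coeff_mk, coeff_subst_eq_sum_range hg]

theorem expMul_eq_rescale_exp (x : ℚ) : expMul x = rescale x (exp ℚ) := by
  ext n
  simp [expMul, coeff_rescale, div_eq_mul_inv]

theorem expMul_zero : expMul 0 = 1 := by
  simp [expMul_eq_rescale_exp]

theorem onePlusPow_subst_exp_sub_one (x : ℚ) :
    (onePlusPow x).subst (exp ℚ - 1) = expMul x := by
  have hlog : constantCoeff (x • log ℚ) = 0 := by simp
  rw [onePlusPow, logOneAdd_eq_log, psComp_eq_subst _ hlog,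
    subst_comp_subst_apply (HasSubst.of_constantCoeff_zero' hlog) HasSubst.exp_sub_one,
    subst_smul HasSubst.exp_sub_one, log_subst_exp_sub_one, expMul_eq_rescale_exp,
    rescale_eq_subst]

theorem subst_exp_sub_one_eq_mul {r s : ℕ} {x : ℚ} {D B E : ℚ⟦X⟧}
    (hD : logOneAdd ^ r * 2 ^ s * onePlusPow x = X ^ r * (X + 2) ^ s * D)
    (hB : X ^ r * expMul x = (exp ℚ - 1) ^ r * B)
    (hE : 2 ^ s = (exp ℚ + 1) ^ s * E) :
    D.subst (exp ℚ - 1) = B * E := by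
  have hsub := HasSubst.exp_sub_one (A := ℚ)
  have h := congrArg (substAlgHom (R := ℚ) hsub) hD
  simp only [map_mul, map_pow, map_add, map_ofNat, coe_substAlgHom, subst_X hsub,
    logOneAdd_eq_log, log_subst_exp_sub_one, onePlusPow_subst_exp_sub_one,
    sub_add_eq_add_sub] at h
  have hne : (exp ℚ - 1) ^ r * (exp ℚ + 1) ^ s ≠ 0 := by
    refine mul_ne_zero (pow_ne_zero _ fun h0 => ?_) (pow_ne_zero _ fun h0 => ?_)
    · simpa using congrArg (coeff 1) h0
    · simpa using congrArg constantCoeff h0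
  refine mul_left_cancel₀ hne ?_
  calc (exp ℚ - 1) ^ r * (exp ℚ + 1) ^ s * D.subst (exp ℚ - 1)
      = X ^ r * 2 ^ s * expMul x := by rw [h]; ring
    _ = (exp ℚ - 1) ^ r * (exp ℚ + 1) ^ s * (B * E) := by rw [mul_right_comm, hB, hE]; ring

theorem DC_stirling2_sum_eq_bernoulli_euler_sum_general
    (r s : ℕ) (n : ℕ) (x : ℚ)
    (DC B E : ℕ → ℚ) (S2 : ℕ → ℕ → ℚ)
    (hDC : logOneAdd ^ r * (2 : PowerSeries ℚ) ^ s * onePlusPow x =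
      PowerSeries.X ^ r * (PowerSeries.X + 2) ^ s * (PowerSeries.mk fun k => DC k / (k.factorial : ℚ)))
    (hB : (PowerSeries.X : PowerSeries ℚ) ^ r * expMul x =
      (PowerSeries.exp ℚ - 1) ^ r * (PowerSeries.mk fun k => B k / (k.factorial : ℚ)))
    (hE : (2 : PowerSeries ℚ) ^ s * expMul (0 : ℚ) =
      (PowerSeries.exp ℚ + 1) ^ s * (PowerSeries.mk fun k => E k / (k.factorial : ℚ)))
    (hS2 : ∀ m, (PowerSeries.exp ℚ - 1) ^ m =
      (m.factorial : ℚ) • (PowerSeries.mk fun k => S2 k m / (k.factorial : ℚ))) :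
    ∑ m ∈ Finset.range (n + 1), DC m * S2 n m =
      ∑ l ∈ Finset.range (n + 1), (n.choose l : ℚ) * B l * E (n - l) := by
  rw [expMul_zero, mul_one] at hE
  rw [← factorial_mul_coeff_subst_exp_sub_one DC S2 hS2, subst_exp_sub_one_eq_mul hDC hB hE,
    factorial_mul_coeff_mul_mk_div_factorial]

theorem DC_stirling2_sum_eq_bernoulli_euler_sum
    (r s : ℕ) (hr : 1 ≤ r) (hs : 1 ≤ s) (n : ℕ) (x : ℚ)
    (DC B E : ℕ → ℚ) (S2 : ℕ → ℕ → ℚ)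
    (hDC : logOneAdd ^ r * (2 : PowerSeries ℚ) ^ s * onePlusPow x =
      PowerSeries.X ^ r * (PowerSeries.X + 2) ^ s * (PowerSeries.mk fun k => DC k / (k.factorial : ℚ)))
    (hB : (PowerSeries.X : PowerSeries ℚ) ^ r * expMul x =
      (PowerSeries.exp ℚ - 1) ^ r * (PowerSeries.mk fun k => B k / (k.factorial : ℚ)))
    (hE : (2 : PowerSeries ℚ) ^ s * expMul (0 : ℚ) =
      (PowerSeries.exp ℚ + 1) ^ s * (PowerSeries.mk fun k => E k / (k.factorial : ℚ)))
    (hS2 : ∀ m, (PowerSeries.exp ℚ - 1) ^ m =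
      (m.factorial : ℚ) • (PowerSeries.mk fun k => S2 k m / (k.factorial : ℚ))) :
    ∑ m ∈ Finset.range (n + 1), DC m * S2 n m =
      ∑ l ∈ Finset.range (n + 1), (n.choose l : ℚ) * B l * E (n - l) :=
  DC_stirling2_sum_eq_bernoulli_euler_sum_general r s n x DC B E S2 hDC hB hE hS2
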